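/- The homomorphism φ : W → G sending r_a to ρ_a is injective (hence an isomorphism onto G), where W is the abstract Coxeter group on generators {r_a : a ∈ Π} with relations (r_a r_b)^{m_{ab}} = 1, and G = ⟨ρ_a : a ∈ Π⟩ ≤ GL(V). -/

import Mathlib

open Real

variable {V : Type*} [AddCommGroup V] [Module ℝ V]

/-- The set of positive linear combinations of a set `A`. -/
def PLC (A : Set V) : Set V :=
  {v | ∃ (s : Finset V) (c : V → ℝ), (↑s : Set V) ⊆ A ∧ (∀ x ∈ s, 0 ≤ c x) ∧
    (∃ x ∈ s, 0 < c x) ∧ v = ∑ x ∈ s, c x • x}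

/-- A Coxeter datum (Krammer): a root basis `Pi` in `V` with bilinear form `B`. -/
structure CoxeterDatum (V : Type*) [AddCommGroup V] [Module ℝ V] where
  B : LinearMap.BilinForm ℝ V
  Pi : Set V
  norm_one : ∀ a ∈ Pi, B a a = 1
  symm : ∀ a ∈ Pi, ∀ b ∈ Pi, B a b = B b a
  offdiag : ∀ a ∈ Pi, ∀ b ∈ Pi, a ≠ b →
    (∃ m : ℕ, 2 ≤ m ∧ B a b = -Real.cos (Real.pi / m)) ∨ B a b ≤ -1
  zero_not_plc : (0 : V) ∉ PLC Pi

namespace CoxeterDatum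

variable (D : CoxeterDatum V)

/-- The reflection in the vector `a`, as a linear endomorphism of `V`. -/
noncomputable def refl (a : V) : Module.End ℝ V where
  toFun x := x - (2 * D.B x a) • a
  map_add' x y := by simp only [map_add, LinearMap.add_apply]; module
  map_smul' c x := by simp only [map_smul, LinearMap.smul_apply, smul_eq_mul,
    RingHom.id_apply]; module

/-- The set of simple reflections, as invertible endomorphisms of `V`. -/
def simples : Set (Module.End ℝ V)ˣ :=
  {u | ∃ a ∈ D.Pi, (u : Module.End ℝ V) = D.refl a}

/-- The Coxeter group `W`, realized as the group generated by the simple reflections. -/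
noncomputable def Wgrp : Subgroup (Module.End ℝ V)ˣ := Subgroup.closure D.simples

/-- The root system. -/
def roots : Set V :=
  {x | ∃ w ∈ D.Wgrp, ∃ a ∈ D.Pi, x = (w : Module.End ℝ V) a}

/-- The positive roots. -/
def posRoots : Set V := D.roots ∩ PLC D.Pi

/-- The negative roots. -/
def negRoots : Set V := {x | -x ∈ D.posRoots}

/-- The length of an element of `W` with respect to the simple reflections. -/
noncomputable def len (w : (Module.End ℝ V)ˣ) : ℕ :=
  sInf {n | ∃ l : List (Module.End ℝ V)ˣ,
    l.length = n ∧ (∀ u ∈ l, u ∈ D.simples) ∧ l.prod = w}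

/-- The depth of a root. -/
noncomputable def dp (x : V) : ℕ :=
  sInf {n | ∃ w ∈ D.Wgrp, D.len w = n ∧ (w : Module.End ℝ V) x ∈ D.negRoots}

/-- Dominance: `x` dominates `y` if every `w ∈ W` making `x` negative makes `y` negative. -/
def dom (x y : V) : Prop :=
  ∀ w ∈ D.Wgrp, (w : Module.End ℝ V) x ∈ D.negRoots → (w : Module.End ℝ V) y ∈ D.negRoots

/-- `D(x)`: the set of positive roots other than `x` dominated by `x`. -/
def DSet (x : V) : Set V := {y | y ∈ D.posRoots ∧ y ≠ x ∧ D.dom x y}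

/-- `D_n`: the set of positive roots dominating exactly `n` other positive roots. -/
def Dn (n : ℕ) : Set V :=
  {x | x ∈ D.posRoots ∧ (D.DSet x).Finite ∧ (D.DSet x).ncard = n}

/-- The set of reflections of `W`. -/
def TSet : Set (Module.End ℝ V)ˣ :=
  {t | ∃ w ∈ D.Wgrp, ∃ s ∈ D.simples, t = w * s * w⁻¹}

/-- `N(w)`: the set of positive roots sent to negative roots by `w`. -/
def NSet (w : (Module.End ℝ V)ˣ) : Set V :=
  {z | z ∈ D.posRoots ∧ (w : Module.End ℝ V) z ∈ D.negRoots}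

/-- `N̄(w)`: the reflections `t` with `ℓ(wt) < ℓ(w)`. -/
def Nbar (w : (Module.End ℝ V)ˣ) : Set (Module.End ℝ V)ˣ :=
  {t | t ∈ D.TSet ∧ D.len (w * t) < D.len w}

/-- The canonical generators of a reflection subgroup `W'`. -/
def canGens (W' : Subgroup (Module.End ℝ V)ˣ) : Set (Module.End ℝ V)ˣ :=
  {t | t ∈ D.TSet ∧ D.Nbar t ∩ (W' : Set (Module.End ℝ V)ˣ) = {t}}

/-- `S(x)`: elements of `W` of minimal length sending `x` into `Π` (inverse-wise). -/
def SSet (x : V) : Set (Module.End ℝ V)ˣ :=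
  {w | w ∈ D.Wgrp ∧ D.len w = D.dp x - 1 ∧ ((w⁻¹ : (Module.End ℝ V)ˣ) : Module.End ℝ V) x ∈ D.Pi}

end CoxeterDatum

/-! Tits' argument. If `ℓ(w s_a) > ℓ(w)`, then `φ w` maps `a` into `PLC Π`, by induction on
`ℓ(w)`: for a descent `b` of `w`, write `w = v · (⋯ s_a s_b)` with an alternating factor of
length `k < m_ab` and `v` without descent at `a` or `b`. The alternating factor sends `a` to
`U_k(t) a' + U_{k-1}(t) b'` with `{a', b'} = {a, b}`, `t = -B(a, b)` and `U` the Chebyshev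
polynomials of the second kind; these coefficients are nonnegative because either
`t = cos(π/m_ab)` with `k < m_ab`, or `t ≥ 1`. Finally, if `φ w = 1` and `a` is a descent of
`w ≠ 1`, then `φ (w s_a) a = -a`, which would put `0 = a + (-a)` in `PLC Π`. -/

open Polynomial Chebyshev CoxeterSystem

section PositiveCombinations

variable {A : Set V} {x y : V}

lemma mem_PLC_of_mem (hx : x ∈ A) : x ∈ PLC A :=
  ⟨{x}, fun _ => 1, by simpa, by simp, ⟨x, by simp⟩, by simp⟩

lemma smul_mem_PLC {r : ℝ} (hr : 0 < r) (hx : x ∈ PLC A) : r • x ∈ PLC A := by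
  obtain ⟨s, c, hsA, hc, ⟨z, hz, hcz⟩, rfl⟩ := hx
  refine ⟨s, fun x => r * c x, hsA, fun x hx => mul_nonneg hr.le (hc x hx),
    ⟨z, hz, mul_pos hr hcz⟩, ?_⟩
  simp only [Finset.smul_sum, smul_smul]

lemma add_mem_PLC (hx : x ∈ PLC A) (hy : y ∈ PLC A) : x + y ∈ PLC A := by
  classical
  obtain ⟨s, c, hsA, hc, ⟨z, hz, hcz⟩, rfl⟩ := hx
  obtain ⟨t, d, htA, hd, -, rfl⟩ := hy
  have hc' : ∀ x, 0 ≤ if x ∈ s then c x else 0 := fun x => by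
    split_ifs with h
    exacts [hc x h, le_rfl]
  have hd' : ∀ x, 0 ≤ if x ∈ t then d x else 0 := fun x => by
    split_ifs with h
    exacts [hd x h, le_rfl]
  refine ⟨s ∪ t, fun x => (if x ∈ s then c x else 0) + (if x ∈ t then d x else 0),
    by simp [hsA, htA], fun x _ => add_nonneg (hc' x) (hd' x),
    ⟨z, Finset.mem_union_left _ hz, by simpa [hz] using add_pos_of_pos_of_nonneg hcz (hd' z)⟩,
    ?_⟩
  simp only [add_smul, ite_smul, zero_smul, Finset.sum_add_distrib, Finset.sum_ite_mem,
    Finset.union_inter_cancel_left, Finset.union_inter_cancel_right]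

lemma smul_add_smul_mem_PLC {μ ν : ℝ} (hμ : 0 ≤ μ) (hν : 0 ≤ ν) (hμν : μ ≠ 0 ∨ ν ≠ 0)
    (hx : x ∈ PLC A) (hy : y ∈ PLC A) : μ • x + ν • y ∈ PLC A := by
  rcases hμ.eq_or_lt with rfl | hμ
  · simpa using smul_mem_PLC (hν.lt_of_ne' (hμν.resolve_left (by simp))) hy
  rcases hν.eq_or_lt with rfl | hν
  · simpa using smul_mem_PLC hμ hx
  exact add_mem_PLC (smul_mem_PLC hμ hx) (smul_mem_PLC hν hy)

end PositiveCombinations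

namespace Polynomial.Chebyshev

lemma U_real_nonneg_of_one_le {t : ℝ} (ht : 1 ≤ t) {n : ℤ} (hn : -1 ≤ n) :
    0 ≤ (U ℝ n).eval t := by
  have hmono : ∀ k : ℕ,
      0 ≤ (U ℝ (k - 1 : ℤ)).eval t ∧ (U ℝ (k - 1 : ℤ)).eval t ≤ (U ℝ k).eval t := by
    intro k
    induction k with
    | zero => simp
    | succ k ih =>
      have hrec := congrArg (eval t) (U_add_one ℝ (k : ℤ))
      simp only [eval_sub, eval_mul, eval_ofNat, eval_X] at hrec
      push_cast
      simp only [add_sub_cancel_right]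
      constructor <;> nlinarith
  obtain ⟨k, rfl⟩ : ∃ k : ℕ, n = k - 1 := ⟨(n + 1).toNat, by omega⟩
  exact (hmono k).1

lemma U_real_cos_pi_div_nonneg {m : ℕ} (hm : 2 ≤ m) {n : ℤ} (hn : -1 ≤ n) (hnm : n + 1 ≤ m) :
    0 ≤ (U ℝ n).eval (Real.cos (Real.pi / m)) := by
  have hm' : (2 : ℝ) ≤ m := by exact_mod_cast hm
  have hsin : 0 < Real.sin (Real.pi / m) :=
    Real.sin_pos_of_pos_of_lt_pi (by positivity) (div_lt_self Real.pi_pos (by linarith))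
  refine nonneg_of_mul_nonneg_left ?_ hsin
  rw [U_real_cos]
  apply Real.sin_nonneg_of_nonneg_of_le_pi
  · have : (0 : ℝ) ≤ n + 1 := by exact_mod_cast (by omega : (0 : ℤ) ≤ n + 1)
    positivity
  · calc ((n : ℝ) + 1) * (Real.pi / m) ≤ m * (Real.pi / m) := by
          gcongr
          exact_mod_cast hnm
      _ = Real.pi := by field_simp

end Polynomial.Chebyshev

namespace CoxeterSystem

variable {B W : Type*} [Group W] {M : CoxeterMatrix B} (cs : CoxeterSystem M W)

theorem isRightDescent_of_eq_mul_wordProd_alternatingWord {v w : W} {x y : B} {k : ℕ}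
    (hw : w = v * cs.wordProd (alternatingWord x y (k + 1)))
    (hℓ : cs.length w = cs.length v + (k + 1)) : cs.IsRightDescent w y := by
  have hws : w * cs.simple y = v * cs.wordProd (alternatingWord y x k) := by
    rw [hw, alternatingWord_succ, wordProd_concat, ← mul_assoc, simple_mul_simple_cancel_right]
  calc cs.length (w * cs.simple y)
      ≤ cs.length v + cs.length (cs.wordProd (alternatingWord y x k)) := by
        rw [hws]; exact cs.length_mul_le _ _
    _ ≤ cs.length v + k := by
        grw [cs.length_wordProd_le, length_alternatingWord]
    _ < cs.length w := by omega

theorem exists_eq_mul_wordProd_alternatingWord {w : W} {a : B} (ha : ¬cs.IsRightDescent w a)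
    (b : B) : ∃ (v : W) (k : ℕ), ¬cs.IsRightDescent v a ∧ ¬cs.IsRightDescent v b ∧
      w = v * cs.wordProd (alternatingWord a b k) ∧ cs.length w = cs.length v + k := by
  induction hn : cs.length w using Nat.strong_induction_on generalizing a b w with
  | _ n ih =>
  by_cases hb : cs.IsRightDescent w b
  · have hwb : ¬cs.IsRightDescent (w * cs.simple b) b := by
      rwa [← isRightDescent_iff_not_isRightDescent_mul]
    obtain ⟨v, k, hvb, hva, hw, hℓ⟩ := ih _ (hn ▸ hb) hwb a rfl
    refine ⟨v, k + 1, hva, hvb, ?_, ?_⟩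
    · rw [alternatingWord_succ, wordProd_concat, ← mul_assoc, ← hw,
        simple_mul_simple_cancel_right]
    · have := cs.isRightDescent_iff.mp hb
      omega
  · exact ⟨w, 0, ha, hb, by simp [alternatingWord], hn.symm⟩

theorem lt_of_eq_mul_wordProd_alternatingWord {a b : B} {v w : W} {k : ℕ}
    (ha : ¬cs.IsRightDescent w a) (hw : w = v * cs.wordProd (alternatingWord a b k))
    (hℓ : cs.length w = cs.length v + k) (hM : M a b ≠ 0) : k < M a b := by
  by_contra! hk
  have hred : cs.IsReduced (alternatingWord a b k) := by
    have h₁ := cs.length_wordProd_le (alternatingWord a b k)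
    have h₂ := cs.length_mul_le v (cs.wordProd (alternatingWord a b k))
    rw [length_alternatingWord] at h₁
    rw [← hw] at h₂
    rw [IsReduced, length_alternatingWord]
    omega
  rcases hk.lt_or_eq with hlt | rfl
  · exact cs.not_isReduced_alternatingWord a b hM hlt hred
  · -- by the braid relation, `w` would also end with `a`
    obtain ⟨j, hj⟩ := Nat.exists_eq_succ_of_ne_zero hM
    have hbraid : w = v * cs.wordProd (alternatingWord b a (M a b)) := by
      rw [hw, ← braidWord, cs.wordProd_braidWord_eq, braidWord, M.symmetric]
    rw [hj] at hbraid hℓ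
    exact ha (cs.isRightDescent_of_eq_mul_wordProd_alternatingWord hbraid hℓ)

end CoxeterSystem

namespace CoxeterDatum

variable (D : CoxeterDatum V)

/-- `M` is the Coxeter matrix of the datum; `M a b = 0` encodes `m_{ab} = ∞`. -/
def IsCompatible (M : CoxeterMatrix D.Pi) : Prop :=
  ∀ a b : D.Pi, a ≠ b →
    (M a b = 0 → D.B a b ≤ -1) ∧
    (M a b ≠ 0 → 2 ≤ M a b ∧ D.B a b = -Real.cos (Real.pi / (M a b : ℝ)))

lemma refl_apply (a x : V) : D.refl a x = x - (2 * D.B x a) • a := rfl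

lemma refl_apply_self {a : V} (ha : a ∈ D.Pi) : D.refl a a = -a := by
  rw [refl_apply, D.norm_one a ha]
  module

lemma units_apply_ne_zero (u : (Module.End ℝ V)ˣ) {a : V} (ha : a ∈ D.Pi) :
    (u : Module.End ℝ V) a ≠ 0 := by
  rw [map_ne_zero_iff _ ((Module.End.isUnit_iff _).mp u.isUnit).injective]
  rintro rfl
  simpa using D.norm_one 0 ha

lemma U_eval_neg_B_nonneg {M : CoxeterMatrix D.Pi} (hM : D.IsCompatible M) {a b : D.Pi}
    (hab : a ≠ b) {n : ℤ} (hn : -1 ≤ n) (hnM : M a b ≠ 0 → n + 1 ≤ M a b) :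
    0 ≤ (U ℝ n).eval (-D.B a b) := by
  by_cases h0 : M a b = 0
  · exact U_real_nonneg_of_one_le (by linarith [(hM a b hab).1 h0]) hn
  · obtain ⟨hm, hB⟩ := (hM a b hab).2 h0
    rw [hB, neg_neg]
    exact U_real_cos_pi_div_nonneg hm hn (hnM h0)

variable {W : Type*} [Group W] {M : CoxeterMatrix D.Pi} (cs : CoxeterSystem M W)
  {φ : W →* (Module.End ℝ V)ˣ}

theorem apply_wordProd_alternatingWord
    (hφ : ∀ a, (φ (cs.simple a) : Module.End ℝ V) = D.refl a) (a b : D.Pi) (k : ℕ) :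
    (φ (cs.wordProd (alternatingWord a b k)) : Module.End ℝ V) a =
      (U ℝ k).eval (-D.B a b) • (if Even k then (a : V) else b) +
        (U ℝ (k - 1)).eval (-D.B a b) • (if Even k then (b : V) else a) := by
  induction k with
  | zero => simp [alternatingWord]
  | succ k ih =>
    have hrec := congrArg (eval (-D.B a b)) (U_add_one ℝ (k : ℤ))
    simp only [eval_sub, eval_mul, eval_ofNat, eval_X] at hrec
    have haa := D.norm_one a a.2
    have hbb := D.norm_one b b.2
    have hba := D.symm b b.2 a a.2
    rw [alternatingWord_succ', wordProd_cons, map_mul, Units.val_mul, Module.End.mul_apply, ih,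
      apply_ite (fun i : D.Pi => (φ (cs.simple i) : Module.End ℝ V)), hφ, hφ]
    push_cast
    rw [add_sub_cancel_right, hrec]
    by_cases hk : Even k <;>
      simp only [hk, Nat.even_add_one, not_true_eq_false, not_false_eq_true, if_true, if_false,
        refl_apply, map_add, map_smul, haa, hbb, hba] <;>
      module

theorem apply_mem_PLC_of_not_isRightDescent
    (hφ : ∀ a, (φ (cs.simple a) : Module.End ℝ V) = D.refl a) (hM : D.IsCompatible M)
    {w : W} {a : D.Pi} (ha : ¬cs.IsRightDescent w a) : (φ w : Module.End ℝ V) a ∈ PLC D.Pi := by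
  induction hn : cs.length w using Nat.strong_induction_on generalizing w a with
  | _ n ih =>
  by_cases hw : w = 1
  · simpa [hw] using mem_PLC_of_mem a.2
  obtain ⟨b, hb⟩ := cs.exists_rightDescent_of_ne_one hw
  have hab : a ≠ b := by
    rintro rfl
    exact ha hb
  obtain ⟨v, k, hva, hvb, rfl, hℓ⟩ := cs.exists_eq_mul_wordProd_alternatingWord ha b
  have hk : k ≠ 0 := by
    rintro rfl
    simp only [alternatingWord, wordProd_nil, mul_one] at hb
    exact hvb hb
  have hkM : M a b ≠ 0 → k < M a b := cs.lt_of_eq_mul_wordProd_alternatingWord ha rfl hℓ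
  have hμ : 0 ≤ (U ℝ k).eval (-D.B a b) :=
    D.U_eval_neg_B_nonneg hM hab (by omega) fun h => by exact_mod_cast hkM h
  have hν : 0 ≤ (U ℝ (k - 1)).eval (-D.B a b) :=
    D.U_eval_neg_B_nonneg hM hab (by omega) fun h => by have := hkM h; omega
  have hμν : (U ℝ k).eval (-D.B a b) ≠ 0 ∨ (U ℝ (k - 1)).eval (-D.B a b) ≠ 0 := by
    by_contra! h
    apply D.units_apply_ne_zero (φ (cs.wordProd (alternatingWord a b k))) a.2
    simp [D.apply_wordProd_alternatingWord cs hφ, h]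
  have hvPLC : ∀ c ∈ ({a, b} : Set D.Pi), (φ v : Module.End ℝ V) c ∈ PLC D.Pi := by
    rintro c (rfl | rfl)
    exacts [ih _ (by omega) hva rfl, ih _ (by omega) hvb rfl]
  rw [map_mul, Units.val_mul, Module.End.mul_apply, D.apply_wordProd_alternatingWord cs hφ,
    map_add, map_smul, map_smul]
  refine smul_add_smul_mem_PLC hμ hν hμν ?_ ?_ <;> split_ifs <;> apply hvPLC <;> simp

theorem injective_of_isCompatible
    (hφ : ∀ a, (φ (cs.simple a) : Module.End ℝ V) = D.refl a) (hM : D.IsCompatible M) :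
    Function.Injective φ := by
  refine (injective_iff_map_eq_one φ).mpr fun w hw => ?_
  by_contra hw1
  obtain ⟨a, ha⟩ := cs.exists_rightDescent_of_ne_one hw1
  have hmem := D.apply_mem_PLC_of_not_isRightDescent cs hφ hM
    (cs.isRightDescent_iff_not_isRightDescent_mul.mp ha)
  rw [map_mul, hw, one_mul, hφ, D.refl_apply_self a.2] at hmem
  exact D.zero_not_plc (by simpa using add_mem_PLC (mem_PLC_of_mem a.2) hmem)

theorem range_eq_Wgrp (hφ : ∀ a, (φ (cs.simple a) : Module.End ℝ V) = D.refl a) :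
    φ.range = D.Wgrp := by
  rw [MonoidHom.range_eq_map, ← cs.subgroup_closure_range_simple, MonoidHom.map_closure, Wgrp]
  congr 1
  ext u
  constructor
  · rintro ⟨_, ⟨a, rfl⟩, rfl⟩
    exact ⟨a, a.2, hφ a⟩
  · rintro ⟨x, hx, hu⟩
    exact ⟨cs.simple ⟨x, hx⟩, ⟨_, rfl⟩, Units.ext (by rw [hφ, hu])⟩

end CoxeterDatum

/-- Corollary 1.4. The homomorphism `φ : W → G` with `φ(r_a) = ρ_a` is injective,
hence an isomorphism onto `G = ⟨ρ_a : a ∈ Π⟩`. Here `W` is the abstract Coxeter group presented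
by a Coxeter matrix `M` compatible with the datum (`M a b = 0` encodes `m_{ab} = ∞`). -/
theorem geometric_representation_faithful (D : CoxeterDatum V) (M : CoxeterMatrix D.Pi)
    (hM : ∀ a b : D.Pi, a ≠ b →
      (M a b = 0 → D.B a b ≤ -1) ∧
      (M a b ≠ 0 → 2 ≤ M a b ∧ D.B a b = -Real.cos (Real.pi / (M a b : ℝ))))
    (φ : M.Group →* (Module.End ℝ V)ˣ)
    (hφ : ∀ a : D.Pi, ((φ (M.simple a) : Module.End ℝ V)) = D.refl (a : V)) :
    Function.Injective φ ∧ MonoidHom.range φ = D.Wgrp := by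
  have hφ' : ∀ a, (φ (M.toCoxeterSystem.simple a) : Module.End ℝ V) = D.refl a := by
    simpa only [CoxeterMatrix.toCoxeterSystem_simple] using hφ
  exact ⟨D.injective_of_isCompatible M.toCoxeterSystem hφ' hM,
    D.range_eq_Wgrp M.toCoxeterSystem hφ'⟩
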